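/- arXiv:math/0007007 — 3 statements merged into one kernel-verified Lean document; each statement's English description precedes it below -/
import Mathlib

section
/- In the torus expansion setup, let h be a grading-preserving ℚ-algebra endomorphism of B with partial derivatives D_I : A → A. Suppose D_∅ = id_A, and let I ⊆ {1,…,d} be a non-empty subset such that D_J = 0 for every non-empty proper subset J ⊊ I. Then D_I is a derivation of A of degree −|I|: D_I(A_p) ⊆ A_{p−|I|} for all p, and D_I(ab) = D_I(a)·b + (−1)^{|I|·p} a·D_I(b) for all a ∈ A_p and b ∈ A. -/
/-- The square-free monomial `t_I = x_{i₁}⋯x_{i_k}` associated to a subset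
`I = {i₁ < ⋯ < i_k} ⊆ {1,…,d}` (factors multiplied in increasing order of the indices;
`t_∅ = 1`). -/
def sqFreeMonomial {B : Type} [Ring B] {d : ℕ} (x : Fin d → B) (I : Finset (Fin d)) : B :=
  ((I.sort (· ≤ ·)).map x).prod

set_option linter.unusedSectionVars false
set_option maxHeartbeats 1000000

section Helpers

variable {B : Type} [Ring B] [Algebra ℚ B] (𝒜 : ℕ → Submodule ℚ B) [GradedAlgebra 𝒜]

lemma listProd_mem (l : List B) (hl : ∀ y ∈ l, y ∈ 𝒜 1) : l.prod ∈ 𝒜 l.length := by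
  induction l with
  | nil => simpa using SetLike.one_mem_graded 𝒜
  | cons y t ih =>
    have : y * t.prod ∈ 𝒜 (1 + t.length) :=
      SetLike.mul_mem_graded (hl y (by simp)) (ih fun z hz => hl z (by simp [hz]))
    simpa [List.prod_cons, Nat.add_comm] using this

variable (hcomm : ∀ (p q : ℕ), ∀ a ∈ 𝒜 p, ∀ b ∈ 𝒜 q,
      a * b = (-1 : B) ^ (p * q) * (b * a))

include hcomm in
lemma anticomm_one {y z : B} (hy : y ∈ 𝒜 1) (hz : z ∈ 𝒜 1) : y * z = -(z * y) := by
  have := hcomm 1 1 y hy z hz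
  simpa using this

include hcomm in
lemma sq_zero {y : B} (hy : y ∈ 𝒜 1) : y * y = 0 := by
  have h := anticomm_one 𝒜 hcomm hy hy
  have h2 : (2 : ℚ) • (y * y) = 0 := by
    rw [two_smul]; linear_combination (norm := abel) h
  calc y * y = ((2 : ℚ)⁻¹ * 2) • (y * y) := by norm_num
  _ = (2:ℚ)⁻¹ • ((2:ℚ) • (y*y)) := by rw [mul_smul]
  _ = 0 := by rw [h2, smul_zero]

include hcomm in
lemma perm_prod : ∀ {l l' : List B}, l.Perm l' → (∀ y ∈ l, y ∈ 𝒜 1) →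
    ∃ ε : ℚ, l.prod = ε • l'.prod := by
  intro l l' hp
  induction hp with
  | nil => exact fun _ => ⟨1, by simp⟩
  | cons z hperm ih =>
    intro hl
    obtain ⟨ε, hε⟩ := ih fun y hy => hl y (List.mem_cons_of_mem _ hy)
    exact ⟨ε, by simp [List.prod_cons, hε, mul_smul_comm]⟩
  | swap z y t =>
    intro hl
    have hy : y ∈ 𝒜 1 := hl y (by simp)
    have hz : z ∈ 𝒜 1 := hl z (by simp)
    refine ⟨-1, ?_⟩
    simp only [List.prod_cons]
    rw [← mul_assoc, ← mul_assoc, anticomm_one 𝒜 hcomm hy hz]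
    simp
  | trans h1 h2 ih1 ih2 =>
    intro hl
    obtain ⟨ε1, he1⟩ := ih1 hl
    obtain ⟨ε2, he2⟩ := ih2 fun y hy => hl y (h1.mem_iff.mpr hy)
    exact ⟨ε1 * ε2, by rw [he1, he2, smul_smul]⟩

include hcomm in
lemma dup_prod_zero (l : List B) (hl : ∀ y ∈ l, y ∈ 𝒜 1) (hd : ¬ l.Nodup) : l.prod = 0 := by
  classical
  rw [List.nodup_iff_count_le_one] at hd
  push_neg at hd
  obtain ⟨a, ha⟩ := hd
  have hmem : a ∈ l := by
    rw [← List.count_pos_iff]; omega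
  have h1 : l.Perm (a :: l.erase a) := List.perm_cons_erase hmem
  have hmem2 : a ∈ l.erase a := by
    rw [← List.count_pos_iff, List.count_erase_self]; omega
  have h2 : (l.erase a).Perm (a :: (l.erase a).erase a) := List.perm_cons_erase hmem2
  have hperm : l.Perm (a :: a :: (l.erase a).erase a) := h1.trans (h2.cons a)
  obtain ⟨ε, hε⟩ := perm_prod 𝒜 hcomm hperm hl
  rw [hε]
  have ha1 : a ∈ 𝒜 1 := hl a hmem
  simp only [List.prod_cons, ← mul_assoc, sq_zero 𝒜 hcomm ha1, zero_mul, smul_zero]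

end Helpers

section Monomials

variable {B : Type} [Ring B] [Algebra ℚ B] (𝒜 : ℕ → Submodule ℚ B) [GradedAlgebra 𝒜]
variable {d : ℕ} (x : Fin d → B) (hx : ∀ i, x i ∈ 𝒜 1)

include hx in
lemma sqFree_mem (K : Finset (Fin d)) : sqFreeMonomial x K ∈ 𝒜 K.card := by
  have := listProd_mem 𝒜 ((K.sort (· ≤ ·)).map x) (by
    intro y hy
    obtain ⟨i, _, rfl⟩ := List.mem_map.mp hy
    exact hx i)
  simpa [sqFreeMonomial, Finset.length_sort] using this

variable (hcomm : ∀ (p q : ℕ), ∀ a ∈ 𝒜 p, ∀ b ∈ 𝒜 q,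
      a * b = (-1 : B) ^ (p * q) * (b * a))

include hx hcomm in
lemma sqFree_mul (J L : Finset (Fin d)) :
    ∃ ε : ℚ, sqFreeMonomial x J * sqFreeMonomial x L = ε • sqFreeMonomial x (J ∪ L)
      ∧ (J = ∅ → ε = 1) ∧ (L = ∅ → ε = 1) ∧ (¬ Disjoint J L → ε = 0) := by
  classical
  have hxl : ∀ y ∈ (J.sort (· ≤ ·) ++ L.sort (· ≤ ·)).map x, y ∈ 𝒜 1 := by
    intro y hy
    obtain ⟨i, _, rfl⟩ := List.mem_map.mp hy
    exact hx i
  have hprod : sqFreeMonomial x J * sqFreeMonomial x L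
      = ((J.sort (· ≤ ·) ++ L.sort (· ≤ ·)).map x).prod := by
    simp [sqFreeMonomial, List.map_append, List.prod_append]
  by_cases hJ : J = ∅
  · refine ⟨1, ?_, fun _ => rfl, fun _ => rfl,
      fun hdis => absurd (by rw [hJ]; exact Finset.disjoint_empty_left L) hdis⟩
    subst hJ
    simp [sqFreeMonomial]
  by_cases hL : L = ∅
  · refine ⟨1, ?_, fun h => absurd h hJ, fun _ => rfl,
      fun hdis => absurd (by rw [hL]; exact Finset.disjoint_empty_right J) hdis⟩
    subst hL
    simp [sqFreeMonomial]
  by_cases hdis : Disjoint J L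
  · -- disjoint case: permutation
    have hperm : (J.sort (· ≤ ·) ++ L.sort (· ≤ ·)).Perm ((J ∪ L).sort (· ≤ ·)) := by
      rw [← Multiset.coe_eq_coe]
      have hval : (J ∪ L).val = J.val + L.val := by
        rw [← Finset.disjUnion_eq_union J L hdis]; rfl
      rw [Finset.sort_eq, hval, ← Finset.sort_eq (s := J) (r := (· ≤ ·)), ← Finset.sort_eq (s := L) (r := (· ≤ ·))]
      exact Multiset.coe_add _ _
    obtain ⟨ε, hε⟩ := perm_prod 𝒜 hcomm (hperm.map x) hxl
    exact ⟨ε, by rw [hprod, hε]; rfl, fun h => absurd h hJ, fun h => absurd h hL,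
      fun h => absurd hdis h⟩
  · -- non-disjoint: zero
    refine ⟨0, ?_, fun h => absurd h hJ, fun h => absurd h hL, fun _ => rfl⟩
    rw [hprod, zero_smul]
    apply dup_prod_zero 𝒜 hcomm _ hxl
    obtain ⟨i, hiJ, hiL⟩ := Finset.not_disjoint_iff.mp hdis
    intro hnd
    rw [List.map_append, List.nodup_append] at hnd
    exact hnd.2.2 _ (List.mem_map_of_mem (f := x) ((J.mem_sort _).mpr hiJ))
      _ (List.mem_map_of_mem (f := x) ((L.mem_sort _).mpr hiL)) rfl

end Monomials

section Sigma

variable {B : Type} [Ring B] [Algebra ℚ B] (𝒜 : ℕ → Submodule ℚ B) [GradedAlgebra 𝒜]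

noncomputable def sigmaOp (m : ℕ) : B →ₗ[ℚ] B :=
  (DirectSum.decomposeAlgEquiv 𝒜).symm.toLinearMap.comp
    ((DFinsupp.mapRange.linearMap
        (fun q : ℕ => ((-1:ℚ)^(q*m)) • (LinearMap.id : 𝒜 q →ₗ[ℚ] 𝒜 q))).comp
      (DirectSum.decomposeAlgEquiv 𝒜).toLinearMap)

lemma sigmaOp_of_mem {b : B} {p : ℕ} (hb : b ∈ 𝒜 p) (m : ℕ) :
    sigmaOp 𝒜 m b = ((-1:ℚ)^(p*m)) • b := by
  have hrfl : sigmaOp 𝒜 m b = (DirectSum.decomposeAlgEquiv 𝒜).symm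
      ((DFinsupp.mapRange.linearMap
        (fun q : ℕ => ((-1:ℚ)^(q*m)) • (LinearMap.id : 𝒜 q →ₗ[ℚ] 𝒜 q)))
        (DirectSum.decompose 𝒜 b)) := rfl
  rw [hrfl, DirectSum.decompose_of_mem 𝒜 hb]
  classical
  have hmr : (DFinsupp.mapRange.linearMap
        (fun q : ℕ => ((-1:ℚ)^(q*m)) • (LinearMap.id : 𝒜 q →ₗ[ℚ] 𝒜 q)))
        (DirectSum.of (fun i => ↥(𝒜 i)) p ⟨b, hb⟩)
      = DirectSum.of (fun i => ↥(𝒜 i)) p (((-1:ℚ)^(p*m)) • ⟨b, hb⟩) := by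
    simp only [DFinsupp.mapRange.linearMap, LinearMap.coe_mk, AddHom.coe_mk]
    exact DFinsupp.mapRange_single (hf := fun _ => map_zero _)
  rw [hmr]
  have h2 : (DirectSum.of (fun i => ↥(𝒜 i)) p) (((-1:ℚ)^(p*m)) • (⟨b, hb⟩ : 𝒜 p))
      = ((-1:ℚ)^(p*m)) • (DirectSum.of (fun i => ↥(𝒜 i)) p) ⟨b, hb⟩ := by
    rw [← DirectSum.lof_eq_of ℚ, LinearMap.map_smul, DirectSum.lof_eq_of]
  rw [h2, map_smul]
  congr 1
  exact DirectSum.decompose_symm_of 𝒜 _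

lemma sigmaOp_support [inst : ∀ (i : ℕ) (xx : 𝒜 i), Decidable (xx ≠ 0)] (m : ℕ) (b : B) :
    sigmaOp 𝒜 m b = ∑ q ∈ (DirectSum.decompose 𝒜 b).support,
      ((-1:ℚ)^(q*m)) • ((DirectSum.decompose 𝒜 b q : B)) := by
  conv_lhs => rw [← DirectSum.sum_support_decompose 𝒜 b]
  rw [map_sum]
  refine Finset.sum_congr rfl fun q hq => ?_
  exact sigmaOp_of_mem 𝒜 (SetLike.coe_mem _) m

lemma sigmaOp_mem_subalgebra (A : Subalgebra ℚ B)
    (hAgr : ∀ a ∈ A, ∀ p : ℕ, (DirectSum.decompose 𝒜 a p : B) ∈ A)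
    (m : ℕ) {b : B} (hb : b ∈ A) : sigmaOp 𝒜 m b ∈ A := by
  classical
  rw [sigmaOp_support]
  exact Subalgebra.sum_mem A fun q _ => Subalgebra.smul_mem A (hAgr b hb q) _

lemma sigmaOp_zero_deg (b : B) : sigmaOp 𝒜 0 b = b := by
  classical
  rw [sigmaOp_support]
  simp only [Nat.mul_zero, pow_zero, one_smul]
  exact DirectSum.sum_support_decompose 𝒜 b

variable (hcomm : ∀ (p q : ℕ), ∀ a ∈ 𝒜 p, ∀ b ∈ 𝒜 q,
      a * b = (-1 : B) ^ (p * q) * (b * a))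

lemma neg_one_pow_smul (n : ℕ) (z : B) : ((-1:ℚ)^n) • z = (-1:B)^n * z := by
  rw [Algebra.smul_def, map_pow, map_neg, map_one]

include hcomm in
lemma mul_sigmaOp (m : ℕ) {t : B} (ht : t ∈ 𝒜 m) (b : B) :
    b * t = t * sigmaOp 𝒜 m b := by
  classical
  conv_lhs => rw [← DirectSum.sum_support_decompose 𝒜 b]
  rw [sigmaOp_support, Finset.sum_mul, Finset.mul_sum]
  refine Finset.sum_congr rfl fun q hq => ?_
  rw [hcomm q m _ (SetLike.coe_mem _) t ht, mul_smul_comm, neg_one_pow_smul]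

end Sigma

section Decomp

variable {B : Type} [Ring B] [Algebra ℚ B] (𝒜 : ℕ → Submodule ℚ B) [GradedAlgebra 𝒜]

noncomputable def compOp (m : ℕ) : B →ₗ[ℚ] B :=
  ((𝒜 m).subtype).comp ((DFinsupp.lapply m).comp (DirectSum.decomposeAlgEquiv 𝒜).toLinearMap)

lemma compOp_apply (m : ℕ) (b : B) : compOp 𝒜 m b = (DirectSum.decompose 𝒜 b m : B) := rfl

lemma compOp_mul_homog (n m : ℕ) {t : B} (ht : t ∈ 𝒜 n) (c : B) :
    compOp 𝒜 m (t * c) = if n ≤ m then t * compOp 𝒜 (m - n) c else 0 := by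
  classical
  conv_lhs => rw [← DirectSum.sum_support_decompose 𝒜 c]
  rw [Finset.mul_sum, map_sum]
  have hterm : ∀ q, compOp 𝒜 m (t * (DirectSum.decompose 𝒜 c q : B))
      = if n + q = m then t * (DirectSum.decompose 𝒜 c q : B) else 0 := by
    intro q
    have hmem : t * (DirectSum.decompose 𝒜 c q : B) ∈ 𝒜 (n + q) :=
      SetLike.mul_mem_graded ht (SetLike.coe_mem _)
    by_cases hqm : n + q = m
    · rw [if_pos hqm, compOp_apply]
      exact DirectSum.decompose_of_mem_same 𝒜 (hqm ▸ hmem)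
    · rw [if_neg hqm, compOp_apply]
      exact DirectSum.decompose_of_mem_ne 𝒜 hmem hqm
  rw [Finset.sum_congr rfl fun q _ => hterm q]
  by_cases hnm : n ≤ m
  · rw [if_pos hnm]
    have hcond : ∀ q : ℕ, (n + q = m) = (q = m - n) := by
      intro q; apply propext; omega
    simp only [hcond]
    rw [Finset.sum_ite_eq' _ (m - n) (fun q => t * (DirectSum.decompose 𝒜 c q : B))]
    by_cases hs : m - n ∈ (DirectSum.decompose 𝒜 c).support
    · rw [if_pos hs, compOp_apply]
    · rw [if_neg hs, compOp_apply]
      have : (DirectSum.decompose 𝒜 c) (m - n) = 0 := by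
        by_contra hne
        exact hs (DFinsupp.mem_support_iff.mpr hne)
      rw [this]
      simp
  · rw [if_neg hnm]
    refine Finset.sum_eq_zero fun q _ => ?_
    rw [if_neg (by omega)]

end Decomp

/-- computation (2) of Section 4 of Belegradek–Kapovitch: the first
non-vanishing partial derivative of a self-homotopy equivalence of `C × T` is a
negative-degree derivation of `H^*(C)`.
In the torus expansion setup, let `h` be a grading-preserving ℚ-algebra endomorphism of `B`
with partial derivatives `D_I : A → A`.  If `D_∅ = id` and `D_J = 0` for every non-empty
proper subset `J ⊊ I` of a non-empty set `I`, then `D_I` is a derivation of `A` of degree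
`-|I|`. -/
theorem first_nonvanishing_partial_derivative_is_derivation
    {B : Type} [Ring B] [Algebra ℚ B]
    (𝒜 : ℕ → Submodule ℚ B) [GradedAlgebra 𝒜]
    -- graded commutativity of `B`
    (hcomm : ∀ (p q : ℕ), ∀ a ∈ 𝒜 p, ∀ b ∈ 𝒜 q,
      a * b = (-1 : B) ^ (p * q) * (b * a))
    -- `A` is a graded subalgebra of `B`
    (A : Subalgebra ℚ B)
    (hAgr : ∀ a ∈ A, ∀ p : ℕ, (DirectSum.decompose 𝒜 a p : B) ∈ A)
    -- `x₁, …, x_d` are degree-one elements …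
    (d : ℕ) (x : Fin d → B) (hx : ∀ i, x i ∈ 𝒜 1)
    -- … whose `2^d` square-free monomials `t_I` form a basis of `B` as a left `A`-module
    (hfree : Function.Bijective
      (fun f : Finset (Fin d) → A =>
        ∑ I : Finset (Fin d), sqFreeMonomial x I * ((f I : A) : B)))
    -- `h` is a grading-preserving ℚ-algebra endomorphism of `B`
    (h : B →ₐ[ℚ] B)
    (hgr : ∀ p : ℕ, ∀ b ∈ 𝒜 p, h b ∈ 𝒜 p)
    -- with partial derivatives `D_I : A → A`
    (D : Finset (Fin d) → (A →ₗ[ℚ] A))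
    (hD : ∀ a : A, h a = ∑ I : Finset (Fin d), sqFreeMonomial x I * ((D I a : A) : B))
    -- suppose `D_∅ = id` …
    (hD0 : D ∅ = LinearMap.id)
    -- … and `D_J = 0` for every non-empty proper subset `J ⊊ I` of a non-empty `I`
    (I : Finset (Fin d)) (hI : I.Nonempty)
    (hJ : ∀ J : Finset (Fin d), J.Nonempty → J ⊂ I → D J = 0) :
    -- then `D_I` is a derivation of `A` of degree `-|I|`:
    (∀ (p : ℕ) (a : A), (a : B) ∈ 𝒜 p →
      (p < I.card → D I a = 0) ∧
      (∀ q : ℕ, p = q + I.card → ((D I a : A) : B) ∈ 𝒜 q)) ∧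
    (∀ (p : ℕ) (a b : A), (a : B) ∈ 𝒜 p →
      D I (a * b) = D I a * b + (-1 : A) ^ (I.card * p) * (a * D I b)) := by
  classical
  have tmem : ∀ K : Finset (Fin d), sqFreeMonomial x K ∈ 𝒜 K.card :=
    fun K => sqFree_mem 𝒜 x hx K
  constructor
  · -- Part 1: degree statement
    intro p a ha
    have key : ∀ m : ℕ, m ≠ p → ∀ K : Finset (Fin d), K.card ≤ m →
        compOp 𝒜 (m - K.card) ((D K a : A) : B) = 0 := by
      intro m hm
      have hG0 : (fun K : Finset (Fin d) =>
          if hc : K.card ≤ m then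
            (⟨compOp 𝒜 (m - K.card) ((D K a : A) : B), hAgr _ (D K a).2 _⟩ : A)
          else 0) = (fun _ => (0 : A)) := by
        apply hfree.1
        show (∑ K : Finset (Fin d), sqFreeMonomial x K *
            ((if hc : K.card ≤ m then
              (⟨compOp 𝒜 (m - K.card) ((D K a : A) : B), hAgr _ (D K a).2 _⟩ : A)
            else 0 : A) : B))
          = ∑ K : Finset (Fin d), sqFreeMonomial x K * (((0 : A) : A) : B)
        have hz : compOp 𝒜 m (h ↑a) = 0 := by
          rw [compOp_apply]
          exact DirectSum.decompose_of_mem_ne 𝒜 (hgr p ↑a ha) (Ne.symm hm)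
        have hsum : compOp 𝒜 m (h ↑a) = ∑ K : Finset (Fin d), sqFreeMonomial x K *
            ((if hc : K.card ≤ m then
              (⟨compOp 𝒜 (m - K.card) ((D K a : A) : B), hAgr _ (D K a).2 _⟩ : A)
            else 0 : A) : B) := by
          rw [hD a, map_sum]
          refine Finset.sum_congr rfl fun K _ => ?_
          rw [compOp_mul_homog 𝒜 K.card m (tmem K)]
          by_cases hc : K.card ≤ m
          · rw [if_pos hc, dif_pos hc]
          · rw [if_neg hc, dif_neg hc]
            simp
        rw [← hsum, hz]
        simp
      intro K hK
      have := congrFun hG0 K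
      rw [dif_pos hK] at this
      exact congrArg Subtype.val this
    constructor
    · -- p < |I| → D I a = 0
      intro hp
      have hco : ((D I a : A) : B) = 0 := by
        rw [← DirectSum.sum_support_decompose 𝒜 ((D I a : A) : B)]
        refine Finset.sum_eq_zero fun q _ => ?_
        have h1 : compOp 𝒜 ((q + I.card) - I.card) ((D I a : A) : B) = 0 :=
          key (q + I.card) (by omega) I (by omega)
        rw [show (q + I.card) - I.card = q by omega, compOp_apply] at h1
        exact h1
      exact Subtype.ext hco
    · -- p = q + |I| → D I a ∈ 𝒜 q
      intro q hq
      rw [← DirectSum.sum_support_decompose 𝒜 ((D I a : A) : B)]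
      refine Submodule.sum_mem _ fun q' _ => ?_
      by_cases hq' : q' = q
      · subst hq'; exact SetLike.coe_mem _
      · have h1 : compOp 𝒜 ((q' + I.card) - I.card) ((D I a : A) : B) = 0 :=
          key (q' + I.card) (by omega) I (by omega)
        rw [show (q' + I.card) - I.card = q' by omega, compOp_apply] at h1
        rw [h1]
        exact Submodule.zero_mem _
  · -- Part 2: Leibniz rule
    intro p a b ha
    choose eps heq hJe hLe hde using fun J L => sqFree_mul 𝒜 x hx hcomm J L
    have hsigmem : ∀ (m : ℕ) (c : A), sigmaOp 𝒜 m ((c : A) : B) ∈ A :=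
      fun m c => sigmaOp_mem_subalgebra 𝒜 A hAgr m c.2
    set v : Finset (Fin d) × Finset (Fin d) → A := fun JL =>
      eps JL.1 JL.2 • ((⟨sigmaOp 𝒜 JL.2.card ((D JL.1 a : A) : B), hsigmem _ _⟩ : A) * D JL.2 b)
      with hv
    set F : Finset (Fin d) → A := fun K =>
      ∑ JL : Finset (Fin d) × Finset (Fin d), if JL.1 ∪ JL.2 = K then v JL else 0 with hF
    -- the key per-pair product identity
    have hterm : ∀ JL : Finset (Fin d) × Finset (Fin d),
        (sqFreeMonomial x JL.1 * ((D JL.1 a : A) : B))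
          * (sqFreeMonomial x JL.2 * ((D JL.2 b : A) : B))
        = sqFreeMonomial x (JL.1 ∪ JL.2) * ((v JL : A) : B) := by
      rintro ⟨J, L⟩
      have hva : ((v (J, L) : A) : B)
          = eps J L • (sigmaOp 𝒜 L.card ((D J a : A) : B) * ((D L b : A) : B)) := rfl
      have h1 : ((D J a : A) : B) * sqFreeMonomial x L
          = sqFreeMonomial x L * sigmaOp 𝒜 L.card ((D J a : A) : B) :=
        mul_sigmaOp 𝒜 hcomm L.card (tmem L) _
      show sqFreeMonomial x J * ((D J a : A) : B) * (sqFreeMonomial x L * ((D L b : A) : B))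
          = sqFreeMonomial x (J ∪ L) * ((v (J, L) : A) : B)
      rw [hva, mul_smul_comm, ← smul_mul_assoc, ← heq J L]
      simp only [mul_assoc]
      congr 1
      rw [← mul_assoc, h1, mul_assoc]
    have hmain : (fun K => D K (a * b)) = F := by
      apply hfree.1
      show (∑ K : Finset (Fin d), sqFreeMonomial x K * ((D K (a * b) : A) : B))
          = ∑ K : Finset (Fin d), sqFreeMonomial x K * ((F K : A) : B)
      rw [← hD (a * b)]
      have hab : ((↑(a * b) : B)) = (↑a : B) * ↑b := rfl
      rw [show h (↑(a * b) : B) = h ↑a * h ↑b by rw [hab, map_mul]]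
      rw [hD a, hD b, Finset.sum_mul_sum]
      rw [← Finset.sum_product' (f := fun J L =>
        (sqFreeMonomial x J * ((D J a : A) : B)) * (sqFreeMonomial x L * ((D L b : A) : B)))]
      rw [Finset.univ_product_univ]
      calc ∑ JL : Finset (Fin d) × Finset (Fin d),
            (sqFreeMonomial x JL.1 * ((D JL.1 a : A) : B))
              * (sqFreeMonomial x JL.2 * ((D JL.2 b : A) : B))
          = ∑ JL : Finset (Fin d) × Finset (Fin d),
              sqFreeMonomial x (JL.1 ∪ JL.2) * ((v JL : A) : B) :=
            Finset.sum_congr rfl fun JL _ => hterm JL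
        _ = ∑ JL : Finset (Fin d) × Finset (Fin d), ∑ K : Finset (Fin d),
              (if JL.1 ∪ JL.2 = K then sqFreeMonomial x K * ((v JL : A) : B) else 0) := by
            refine Finset.sum_congr rfl fun JL _ => ?_
            rw [Finset.sum_ite_eq _ (JL.1 ∪ JL.2)
              (fun K => sqFreeMonomial x K * ((v JL : A) : B))]
            simp
        _ = ∑ K : Finset (Fin d), ∑ JL : Finset (Fin d) × Finset (Fin d),
              (if JL.1 ∪ JL.2 = K then sqFreeMonomial x K * ((v JL : A) : B) else 0) :=
            Finset.sum_comm
        _ = ∑ K : Finset (Fin d), sqFreeMonomial x K * ((F K : A) : B) := by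
            refine Finset.sum_congr rfl fun K _ => ?_
            rw [hF]
            simp only
            rw [AddSubmonoidClass.coe_finset_sum, Finset.mul_sum]
            refine Finset.sum_congr rfl fun JL _ => ?_
            by_cases hu : JL.1 ∪ JL.2 = K
            · rw [if_pos hu, if_pos hu]
            · rw [if_neg hu, if_neg hu]
              simp
    -- evaluate F at I
    have hFI : F I = D I a * b + (-1 : A) ^ (I.card * p) * (a * D I b) := by
      have hpt : ∀ JL : Finset (Fin d) × Finset (Fin d),
          (if JL.1 ∪ JL.2 = I then v JL else 0)
          = (if JL = (I, ∅) then D I a * b else 0)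
            + (if JL = (∅, I) then (-1 : A) ^ (I.card * p) * (a * D I b) else 0) := by
        rintro ⟨J, L⟩
        simp only [Prod.mk.injEq]
        by_cases hu : J ∪ L = I
        · rw [if_pos hu]
          by_cases hJ0 : J = ∅
          · subst hJ0
            have hLI : L = I := by simpa using hu
            rw [hLI]
            rw [if_neg (by exact fun hx' => hI.ne_empty hx'.1.symm), zero_add,
              if_pos ⟨rfl, rfl⟩]
            have hεv : eps ∅ I = 1 := hJe ∅ I rfl
            have hDa : D ∅ a = a := by rw [hD0]; rfl
            have hσ : (⟨sigmaOp 𝒜 I.card ((D ∅ a : A) : B), hsigmem _ _⟩ : A)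
                = ((-1 : ℚ) ^ (p * I.card)) • a := by
              apply Subtype.ext
              show sigmaOp 𝒜 I.card ((D ∅ a : A) : B) = ((-1 : ℚ) ^ (p * I.card)) • (a : B)
              rw [hDa]
              exact sigmaOp_of_mem 𝒜 ha I.card
            show eps ∅ I • ((⟨sigmaOp 𝒜 I.card ((D ∅ a : A) : B), hsigmem _ _⟩ : A) * D I b)
                = (-1 : A) ^ (I.card * p) * (a * D I b)
            rw [hεv, one_smul, hσ, smul_mul_assoc, neg_one_pow_smul, mul_comm p I.card]
          · by_cases hJI : J = I
            · rw [hJI]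
              by_cases hL0 : L = ∅
              · subst hL0
                rw [if_pos ⟨rfl, rfl⟩, if_neg (fun hx' => hI.ne_empty hx'.1), add_zero]
                have hεv : eps I ∅ = 1 := hLe I ∅ rfl
                have hDb : D ∅ b = b := by rw [hD0]; rfl
                have hσ : (⟨sigmaOp 𝒜 (∅ : Finset (Fin d)).card ((D I a : A) : B),
                    hsigmem _ _⟩ : A) = D I a := by
                  apply Subtype.ext
                  show sigmaOp 𝒜 (∅ : Finset (Fin d)).card ((D I a : A) : B) = ((D I a : A) : B)
                  rw [Finset.card_empty]
                  exact sigmaOp_zero_deg 𝒜 _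
                show eps I ∅ • ((⟨sigmaOp 𝒜 (∅ : Finset (Fin d)).card ((D I a : A) : B),
                    hsigmem _ _⟩ : A) * D ∅ b) = D I a * b
                rw [hεv, one_smul, hσ, hDb]
              · by_cases hLI : L = I
                · rw [hLI]
                  have hεv : eps I I = 0 := hde I I (by
                    rw [disjoint_self, Finset.bot_eq_empty]
                    exact hI.ne_empty)
                  rw [if_neg (fun hx' => hL0 (hLI ▸ hx'.2 : L = ∅)),
                    if_neg (fun hx' => hI.ne_empty hx'.1), add_zero]
                  show eps I I • ((⟨sigmaOp 𝒜 I.card ((D I a : A) : B), hsigmem _ _⟩ : A) * D I b)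
                      = 0
                  rw [hεv, zero_smul]
                · have hLsub : L ⊂ I :=
                    ⟨hu ▸ Finset.subset_union_right, fun hIL => hLI (Finset.Subset.antisymm
                      (hu ▸ Finset.subset_union_right) hIL)⟩
                  have hDLb : D L b = 0 := by
                    rw [hJ L (Finset.nonempty_iff_ne_empty.mpr hL0) hLsub]; rfl
                  rw [if_neg (fun hx' => hL0 hx'.2), if_neg (fun hx' => hI.ne_empty hx'.1),
                    add_zero]
                  show eps I L • ((⟨sigmaOp 𝒜 L.card ((D I a : A) : B), hsigmem _ _⟩ : A) * D L b)
                      = 0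
                  rw [hDLb, mul_zero, smul_zero]
            · have hJsub : J ⊂ I :=
                ⟨hu ▸ Finset.subset_union_left, fun hIJ => hJI (Finset.Subset.antisymm
                  (hu ▸ Finset.subset_union_left) hIJ)⟩
              have hDJa : D J a = 0 := by
                rw [hJ J (Finset.nonempty_iff_ne_empty.mpr hJ0) hJsub]; rfl
              have hσ : (⟨sigmaOp 𝒜 L.card ((D J a : A) : B), hsigmem _ _⟩ : A) = 0 := by
                apply Subtype.ext
                show sigmaOp 𝒜 L.card ((D J a : A) : B) = (0 : B)
                rw [hDJa]
                show sigmaOp 𝒜 L.card ((0 : A) : B) = (0 : B)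
                rw [ZeroMemClass.coe_zero, map_zero]
              rw [if_neg (fun hx' => hJI hx'.1), if_neg (fun hx' => hJ0 hx'.1), add_zero]
              show eps J L • ((⟨sigmaOp 𝒜 L.card ((D J a : A) : B), hsigmem _ _⟩ : A) * D L b) = 0
              rw [hσ, zero_mul, smul_zero]
        · rw [if_neg hu, if_neg (by rintro ⟨rfl, rfl⟩; exact hu (by simp)),
            if_neg (by rintro ⟨rfl, rfl⟩; exact hu (by simp)), add_zero]
      rw [hF]
      simp only
      rw [Finset.sum_congr rfl fun JL _ => hpt JL, Finset.sum_add_distrib,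
        Finset.sum_ite_eq' Finset.univ ((I, ∅) : Finset (Fin d) × Finset (Fin d)),
        Finset.sum_ite_eq' Finset.univ ((∅, I) : Finset (Fin d) × Finset (Fin d))]
      simp
    calc D I (a * b) = F I := congrFun hmain I
      _ = D I a * b + (-1 : A) ^ (I.card * p) * (a * D I b) := hFI
end

section
/- In the torus expansion setup, let I ⊆ {1,…,d} be non-empty with square-free monomial t_I, and let D : A → A be a derivation of A of degree −|I|. Then the ℚ-linear map φ : B → B determined by φ(a·t_J) = a·t_J − t_I·D(a)·t_J for all homogeneous a ∈ A and all subsets J ⊆ {1,…,d} is a grading-preserving ℚ-algebra automorphism of B, whose inverse is the ℚ-linear map determined by a·t_J ↦ a·t_J + t_I·D(a)·t_J. -/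
/-!
Let `N : B → B` be the linear map with `N(a t_J) = t_I D(a) t_J`, defined through coordinates in
the basis `(t_J)`. Multiplying by `t_I`, of degree `|I|`, cancels the Koszul sign of the degree
`-|I|` derivation `D`, so `N` is an ordinary, degree-preserving derivation of `B`. It squares to
zero since `N(t_I) = t_I D(1) t_I = 0` and `t_I² = 0`. Over `ℚ` this forces `N(b) N(c) = 0`, as
`0 = N²(bc) = 2 N(b) N(c)`, so `1 - N` is multiplicative, with inverse `1 + N`.
-/

section SquareZeroDerivation

variable {R B : Type*} [CommRing R] [Ring B] [Algebra R B]

def LinearMap.IsDerivation (N : B →ₗ[R] B) : Prop :=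
  ∀ b c, N (b * c) = N b * c + b * N c

namespace LinearMap.IsDerivation

variable {N : B →ₗ[R] B}

theorem map_one (hN : N.IsDerivation) : N 1 = 0 := by
  simpa using hN 1 1

theorem map_mul_map_eq_zero [IsAddTorsionFree B] (hN : N.IsDerivation) (hNN : N ∘ₗ N = 0)
    (b c : B) : N b * N c = 0 := by
  have hsq : ∀ z, N (N z) = 0 := LinearMap.congr_fun hNN
  have h := hsq (b * c)
  rw [hN, map_add, hN, hN, hsq, hsq, zero_mul, mul_zero, zero_add, add_zero, ← two_nsmul] at h
  exact (smul_eq_zero.mp h).resolve_left two_ne_zero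

theorem of_span_eq_top {S : Set B} (hS : Submodule.span R S = ⊤)
    (h : ∀ b ∈ S, ∀ c ∈ S, N (b * c) = N b * c + b * N c) : N.IsDerivation := by
  have key : (LinearMap.mul R B).compr₂ N =
      (LinearMap.mul R B) ∘ₗ N + (LinearMap.mul R B).compl₂ N :=
    LinearMap.ext_on hS fun b hb => LinearMap.ext_on hS fun c hc => by simpa using h b hb c hc
  intro b c
  simpa using LinearMap.congr_fun₂ key b c

end LinearMap.IsDerivation

def algEquivOfSqZeroDerivation [IsAddTorsionFree B] (N : B →ₗ[R] B) (hN : N.IsDerivation)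
    (hNN : N ∘ₗ N = 0) : B ≃ₐ[R] B :=
  AlgEquiv.ofLinearEquiv
    (LinearEquiv.ofLinearMap (LinearMap.id - N) (LinearMap.id + N)
      (by simp [LinearMap.comp_add, LinearMap.sub_comp, hNN])
      (by simp [LinearMap.comp_sub, LinearMap.add_comp, hNN]))
    (by simp [hN.map_one])
    (fun b c => by
      simp only [LinearEquiv.coe_ofLinearMap, LinearMap.sub_apply, LinearMap.id_apply]
      rw [hN, mul_sub, sub_mul, sub_mul, hN.map_mul_map_eq_zero hNN]
      abel)

@[simp]
theorem algEquivOfSqZeroDerivation_apply [IsAddTorsionFree B] (N : B →ₗ[R] B)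
    (hN : N.IsDerivation) (hNN : N ∘ₗ N = 0) (b : B) :
    algEquivOfSqZeroDerivation N hN hNN b = b - N b := rfl

@[simp]
theorem algEquivOfSqZeroDerivation_symm_apply [IsAddTorsionFree B] (N : B →ₗ[R] B)
    (hN : N.IsDerivation) (hNN : N ∘ₗ N = 0) (b : B) :
    (algEquivOfSqZeroDerivation N hN hNN).symm b = b + N b := rfl

end SquareZeroDerivation

theorem LinearMap.map_mem_of_span_eq_top {ι R B : Type*} [DecidableEq ι] [AddMonoid ι]
    [CommSemiring R] [Semiring B] [Algebra R B] (𝒜 : ι → Submodule R B) [GradedAlgebra 𝒜]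
    (f : B →ₗ[R] B) {S : Set B} (hS : Submodule.span R S = ⊤)
    (hf : ∀ s ∈ S, ∃ j, s ∈ 𝒜 j ∧ f s ∈ 𝒜 j) {i : ι} {b : B} (hb : b ∈ 𝒜 i) : f b ∈ 𝒜 i := by
  have hcomm : f ∘ₗ GradedAlgebra.proj 𝒜 i = GradedAlgebra.proj 𝒜 i ∘ₗ f := by
    refine LinearMap.ext_on hS fun s hs => ?_
    obtain ⟨j, hsj, hfsj⟩ := hf s hs
    by_cases hji : j = i
    · subst hji
      simp [GradedAlgebra.proj_apply, DirectSum.decompose_of_mem_same 𝒜 hsj,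
        DirectSum.decompose_of_mem_same 𝒜 hfsj]
    · simp [GradedAlgebra.proj_apply, DirectSum.decompose_of_mem_ne 𝒜 hsj hji,
        DirectSum.decompose_of_mem_ne 𝒜 hfsj hji]
  have hproj : GradedAlgebra.proj 𝒜 i b = b := by
    rw [GradedAlgebra.proj_apply, DirectSum.decompose_of_mem_same 𝒜 hb]
  rw [← hproj, ← LinearMap.comp_apply, hcomm, LinearMap.comp_apply, GradedAlgebra.proj_apply]
  exact SetLike.coe_mem _

section GradedCommutative

variable {R B : Type*} [CommRing R] [Ring B] [Algebra R B]

def IsGradedCommutative (𝒜 : ℕ → Submodule R B) : Prop :=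
  ∀ (p q : ℕ), ∀ a ∈ 𝒜 p, ∀ b ∈ 𝒜 q, a * b = (-1 : B) ^ (p * q) * (b * a)

variable (R) in
theorem neg_one_pow_mul_eq_smul (n : ℕ) (b : B) : (-1 : B) ^ n * b = ((-1 : R) ^ n) • b := by
  simp [Algebra.smul_def]

namespace IsGradedCommutative

variable {𝒜 : ℕ → Submodule R B} (h𝒜 : IsGradedCommutative 𝒜)
include h𝒜

theorem mul_comm_of_mem {p q : ℕ} {a b : B} (ha : a ∈ 𝒜 p) (hb : b ∈ 𝒜 q) :
    a * b = ((-1 : R) ^ (p * q)) • (b * a) := by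
  rw [h𝒜 p q a ha b hb, neg_one_pow_mul_eq_smul R]

theorem mul_mul_mul_comm_of_mem {p q : ℕ} {a b c e : B} (hb : b ∈ 𝒜 p) (hc : c ∈ 𝒜 q) :
    a * b * (c * e) = ((-1 : R) ^ (p * q)) • (a * c * (b * e)) := by
  rw [mul_assoc, ← mul_assoc b, h𝒜.mul_comm_of_mem hb hc]
  simp only [smul_mul_assoc, mul_smul_comm, mul_assoc]

theorem mul_self_eq_zero_of_mem_one [IsAddTorsionFree B] {a : B} (ha : a ∈ 𝒜 1) : a * a = 0 :=
  self_eq_neg.mp (by simpa using h𝒜.mul_comm_of_mem ha ha)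

variable {ι : Type*} {x : ι → B} (hx : ∀ i, x i ∈ 𝒜 1)
include hx

theorem exists_prod_map_eq_smul_of_perm {l l' : List ι} (hl : l.Perm l') :
    ∃ r : R, (l.map x).prod = r • (l'.map x).prod := by
  induction hl with
  | nil => exact ⟨1, by simp⟩
  | cons i _ ih =>
    obtain ⟨r, hr⟩ := ih
    exact ⟨r, by simp [hr]⟩
  | swap i j l =>
    refine ⟨(-1) ^ (1 * 1), ?_⟩
    simp only [List.map_cons, List.prod_cons, ← mul_assoc, h𝒜.mul_comm_of_mem (hx j) (hx i),
      smul_mul_assoc]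
  | trans _ _ ih₁ ih₂ =>
    obtain ⟨r₁, hr₁⟩ := ih₁
    obtain ⟨r₂, hr₂⟩ := ih₂
    exact ⟨r₁ * r₂, by rw [hr₁, hr₂, smul_smul]⟩

theorem prod_map_eq_zero_of_not_nodup [IsAddTorsionFree B] [DecidableEq ι] {l : List ι}
    (hl : ¬ l.Nodup) : (l.map x).prod = 0 := by
  induction l with
  | nil => simp at hl
  | cons i l ih =>
    rw [List.nodup_cons, not_and_or, not_not] at hl
    rcases hl with hi | hl
    · obtain ⟨r, hr⟩ := h𝒜.exists_prod_map_eq_smul_of_perm hx (List.perm_cons_erase hi)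
      simp only [List.map_cons, List.prod_cons] at hr ⊢
      rw [hr, mul_smul_comm, ← mul_assoc, h𝒜.mul_self_eq_zero_of_mem_one (hx i), zero_mul,
        smul_zero]
    · simp [ih hl]

end IsGradedCommutative

end GradedCommutative

section SqFreeMonomial

variable {R B : Type} [CommRing R] [Ring B] [Algebra R B] {𝒜 : ℕ → Submodule R B} {d : ℕ}
  {x : Fin d → B}

theorem sqFreeMonomial_mem [SetLike.GradedMonoid 𝒜] (hx : ∀ i, x i ∈ 𝒜 1) (J : Finset (Fin d)) :
    sqFreeMonomial x J ∈ 𝒜 J.card := by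
  simpa [sqFreeMonomial] using
    SetLike.list_prod_map_mem_graded (J.sort (· ≤ ·)) (fun _ => 1) x fun i _ => hx i

variable [IsAddTorsionFree B] (h𝒜 : IsGradedCommutative 𝒜) (hx : ∀ i, x i ∈ 𝒜 1)
include h𝒜 hx

theorem exists_sqFreeMonomial_mul_eq_smul (J K : Finset (Fin d)) :
    ∃ r : R, sqFreeMonomial x J * sqFreeMonomial x K = r • sqFreeMonomial x (J ∪ K) := by
  classical
  rw [sqFreeMonomial, sqFreeMonomial, ← List.prod_append, ← List.map_append]
  by_cases hnd : (J.sort (· ≤ ·) ++ K.sort (· ≤ ·)).Nodup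
  · have hperm : (J.sort (· ≤ ·) ++ K.sort (· ≤ ·)).Perm ((J ∪ K).sort (· ≤ ·)) :=
      List.perm_of_nodup_nodup_toFinset_eq hnd (Finset.sort_nodup _ _) (by simp)
    exact h𝒜.exists_prod_map_eq_smul_of_perm hx hperm
  · exact ⟨0, by rw [h𝒜.prod_map_eq_zero_of_not_nodup hx hnd, zero_smul]⟩

theorem sqFreeMonomial_mul_self {I : Finset (Fin d)} (hI : I.Nonempty) :
    sqFreeMonomial x I * sqFreeMonomial x I = 0 := by
  rw [sqFreeMonomial, ← List.prod_append, ← List.map_append]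
  refine h𝒜.prod_map_eq_zero_of_not_nodup hx fun hnd => ?_
  obtain ⟨i, hi⟩ := hI
  have hmem : i ∈ I.sort (· ≤ ·) := by simpa using hi
  exact List.disjoint_of_nodup_append hnd hmem hmem

end SqFreeMonomial

section MonomialExpansion

variable {R B : Type} [CommRing R] [Ring B] [Algebra R B] (A : Subalgebra R B) {d : ℕ}
  (x : Fin d → B)

def monomialExpansion (E : A →ₗ[R] B) : (Finset (Fin d) → A) →ₗ[R] B where
  toFun f := ∑ J, sqFreeMonomial x J * E (f J)
  map_add' f g := by simp [mul_add, Finset.sum_add_distrib]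
  map_smul' r f := by simp [Finset.smul_sum]

variable {A x}

theorem monomialExpansion_single (E : A →ₗ[R] B) (J : Finset (Fin d)) (c : A) :
    monomialExpansion A x E (Pi.single J c) = sqFreeMonomial x J * E c := by
  classical
  simp only [monomialExpansion, LinearMap.coe_mk, AddHom.coe_mk]
  rw [Finset.sum_eq_single J (fun K _ hK => by simp [hK]) (by simp), Pi.single_eq_same]

variable (hfree : Function.Bijective (monomialExpansion A x A.val.toLinearMap))

noncomputable def monomialExtension (E : A →ₗ[R] B) : B →ₗ[R] B :=
  monomialExpansion A x E ∘ₗ (LinearEquiv.ofBijective _ hfree).symm.toLinearMap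

theorem monomialExtension_sqFreeMonomial_mul (E : A →ₗ[R] B) (J : Finset (Fin d)) (c : A) :
    monomialExtension hfree E (sqFreeMonomial x J * c) = sqFreeMonomial x J * E c := by
  have hc : (LinearEquiv.ofBijective _ hfree).symm (sqFreeMonomial x J * c) = Pi.single J c := by
    rw [LinearEquiv.symm_apply_eq, LinearEquiv.ofBijective_apply, monomialExpansion_single]
    rfl
  rw [monomialExtension, LinearMap.comp_apply, LinearEquiv.coe_coe, hc, monomialExpansion_single]

end MonomialExpansion

section Twist

variable {R B : Type} [CommRing R] [Ring B] [Algebra R B] {𝒜 : ℕ → Submodule R B}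
  {A : Subalgebra R B} {d : ℕ} {x : Fin d → B} {I : Finset (Fin d)} {D : A →ₗ[R] A}
  (h𝒜 : IsGradedCommutative 𝒜) (hx : ∀ i, x i ∈ 𝒜 1)
  (hdeg : ∀ (p : ℕ) (a : A), (a : B) ∈ 𝒜 p →
    (p < I.card → D a = 0) ∧ (∀ q : ℕ, p = q + I.card → ((D a : A) : B) ∈ 𝒜 q))
  (hleib : ∀ (p : ℕ) (a b : A), (a : B) ∈ 𝒜 p →
    D (a * b) = D a * b + (-1 : A) ^ (I.card * p) * (a * D b))

include hdeg in
theorem coe_map_mem_sub {p : ℕ} {a : A} (ha : (a : B) ∈ 𝒜 p) :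
    ((D a : A) : B) ∈ 𝒜 (p - I.card) := by
  rcases lt_or_ge p I.card with hp | hp
  · simp [(hdeg p a ha).1 hp]
  · exact (hdeg p a ha).2 _ (by omega)

include hx hdeg in
theorem sqFreeMonomial_mul_map_mem [SetLike.GradedMonoid 𝒜] {p : ℕ} {a : A}
    (ha : (a : B) ∈ 𝒜 p) : sqFreeMonomial x I * ((D a : A) : B) ∈ 𝒜 p := by
  rcases lt_or_ge p I.card with hp | hp
  · simp [(hdeg p a ha).1 hp]
  · simpa [Nat.add_sub_cancel' hp] using
      SetLike.mul_mem_graded (sqFreeMonomial_mem hx I) (coe_map_mem_sub hdeg ha)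

include hleib in
theorem map_one_eq_zero_of_leibniz [SetLike.GradedMonoid 𝒜] : D 1 = 0 := by
  simpa using hleib 0 1 1 (by simpa using SetLike.one_mem_graded 𝒜)

include h𝒜 hx hleib in
theorem sqFreeMonomial_mul_map_mul [SetLike.GradedMonoid 𝒜] {p : ℕ} {a : A}
    (ha : (a : B) ∈ 𝒜 p) (b : A) :
    sqFreeMonomial x I * ((D (a * b) : A) : B) =
      sqFreeMonomial x I * ((D a : A) : B) * b + a * (sqFreeMonomial x I * ((D b : A) : B)) := by
  have hswap := h𝒜.mul_comm_of_mem (sqFreeMonomial_mem hx I) ha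
  rw [hleib p a b ha]
  push_cast
  rw [neg_one_pow_mul_eq_smul R, mul_add, mul_smul_comm, ← mul_assoc _ (a : B), hswap,
    smul_mul_assoc, smul_smul, ← mul_pow, neg_one_mul, neg_neg, one_pow, one_smul]
  simp only [mul_assoc]

variable (𝒜 A x) in
def homogeneousMulSqFreeMonomials : Set B :=
  {b | ∃ (p : ℕ) (a : A) (J : Finset (Fin d)), (a : B) ∈ 𝒜 p ∧ b = a * sqFreeMonomial x J}

variable [GradedAlgebra 𝒜] (hfree : Function.Bijective (monomialExpansion A x A.val.toLinearMap))
  (hA : ∀ a ∈ A, ∀ p : ℕ, (DirectSum.decompose 𝒜 a p : B) ∈ A)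

include h𝒜 hx hfree hA in
theorem span_homogeneousMulSqFreeMonomials :
    Submodule.span R (homogeneousMulSqFreeMonomials 𝒜 A x) = ⊤ := by
  classical
  refine Submodule.eq_top_iff'.mpr fun b => ?_
  obtain ⟨f, rfl⟩ := hfree.2 b
  simp only [monomialExpansion, LinearMap.coe_mk, AddHom.coe_mk, AlgHom.toLinearMap_apply,
    Subalgebra.coe_val]
  refine Submodule.sum_mem _ fun J _ => ?_
  rw [← DirectSum.sum_support_decompose 𝒜 ((f J : A) : B), Finset.mul_sum]
  refine Submodule.sum_mem _ fun p _ => ?_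
  have hp := SetLike.coe_mem (DirectSum.decompose 𝒜 ((f J : A) : B) p)
  rw [h𝒜.mul_comm_of_mem (sqFreeMonomial_mem hx J) hp]
  exact Submodule.smul_mem _ _ (Submodule.subset_span ⟨p, ⟨_, hA _ (f J).2 p⟩, J, hp, rfl⟩)

variable (I D) in
noncomputable def twistDerivation : B →ₗ[R] B :=
  monomialExtension hfree (LinearMap.mulLeft R (sqFreeMonomial x I) ∘ₗ A.val.toLinearMap ∘ₗ D)

include h𝒜 hx hdeg

theorem twistDerivation_mul_sqFreeMonomial {p : ℕ} {a : A} (ha : (a : B) ∈ 𝒜 p)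
    (J : Finset (Fin d)) :
    twistDerivation I D hfree (a * sqFreeMonomial x J) =
      sqFreeMonomial x I * ((D a : A) : B) * sqFreeMonomial x J := by
  have hJ := sqFreeMonomial_mem hx J
  rw [h𝒜.mul_comm_of_mem ha hJ, map_smul, twistDerivation, monomialExtension_sqFreeMonomial_mul,
    h𝒜.mul_comm_of_mem (sqFreeMonomial_mul_map_mem hx hdeg ha) hJ]
  rfl

theorem twistDerivation_mul_sqFreeMonomial_mul [IsAddTorsionFree B] {p : ℕ} {a : A}
    (ha : (a : B) ∈ 𝒜 p) (J K : Finset (Fin d)) :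
    twistDerivation I D hfree (a * (sqFreeMonomial x J * sqFreeMonomial x K)) =
      sqFreeMonomial x I * ((D a : A) : B) * (sqFreeMonomial x J * sqFreeMonomial x K) := by
  obtain ⟨r, hr⟩ := exists_sqFreeMonomial_mul_eq_smul h𝒜 hx J K
  rw [hr, mul_smul_comm, map_smul, twistDerivation_mul_sqFreeMonomial h𝒜 hx hdeg hfree ha,
    mul_smul_comm]

include hA in
theorem twistDerivation_mem {p : ℕ} {b : B} (hb : b ∈ 𝒜 p) :
    twistDerivation I D hfree b ∈ 𝒜 p := by
  classical
  refine LinearMap.map_mem_of_span_eq_top 𝒜 _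
    (span_homogeneousMulSqFreeMonomials h𝒜 hx hfree hA) ?_ hb
  rintro _ ⟨q, a, J, ha, rfl⟩
  rw [twistDerivation_mul_sqFreeMonomial h𝒜 hx hdeg hfree ha]
  exact ⟨q + J.card, SetLike.mul_mem_graded ha (sqFreeMonomial_mem hx J),
    SetLike.mul_mem_graded (sqFreeMonomial_mul_map_mem hx hdeg ha) (sqFreeMonomial_mem hx J)⟩

include hleib hA

theorem isDerivation_twistDerivation [IsAddTorsionFree B] :
    (twistDerivation I D hfree).IsDerivation := by
  refine .of_span_eq_top (span_homogeneousMulSqFreeMonomials h𝒜 hx hfree hA) ?_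
  rintro _ ⟨p, a, J, ha, rfl⟩ _ ⟨q, b, K, hb, rfl⟩
  have hJ := sqFreeMonomial_mem hx J
  have hab : ((a * b : A) : B) ∈ 𝒜 (p + q) := SetLike.mul_mem_graded ha hb
  rw [twistDerivation_mul_sqFreeMonomial h𝒜 hx hdeg hfree ha,
    twistDerivation_mul_sqFreeMonomial h𝒜 hx hdeg hfree hb,
    h𝒜.mul_mul_mul_comm_of_mem hJ hb, map_smul, ← Subalgebra.coe_mul,
    twistDerivation_mul_sqFreeMonomial_mul h𝒜 hx hdeg hfree hab,
    sqFreeMonomial_mul_map_mul h𝒜 hx hleib ha,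
    h𝒜.mul_mul_mul_comm_of_mem hJ hb,
    h𝒜.mul_mul_mul_comm_of_mem hJ (sqFreeMonomial_mul_map_mem hx hdeg hb), add_mul, smul_add]

theorem twistDerivation_comp_self [IsAddTorsionFree B] (hI : I.Nonempty) :
    twistDerivation I D hfree ∘ₗ twistDerivation I D hfree = 0 := by
  have hN := isDerivation_twistDerivation h𝒜 hx hdeg hleib hfree hA
  have hNtI : twistDerivation I D hfree (sqFreeMonomial x I) = 0 := by
    simpa [map_one_eq_zero_of_leibniz hleib] using
      twistDerivation_mul_sqFreeMonomial h𝒜 hx hdeg hfree (a := 1)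
        (by simpa using SetLike.one_mem_graded 𝒜) I
  refine LinearMap.ext_on (span_homogeneousMulSqFreeMonomials h𝒜 hx hfree hA) ?_
  rintro _ ⟨p, a, J, ha, rfl⟩
  rw [LinearMap.comp_apply, twistDerivation_mul_sqFreeMonomial h𝒜 hx hdeg hfree ha, mul_assoc,
    hN, hNtI, twistDerivation_mul_sqFreeMonomial h𝒜 hx hdeg hfree (coe_map_mem_sub hdeg ha)]
  simp [← mul_assoc, sqFreeMonomial_mul_self h𝒜 hx hI]

end Twist

/-- the automorphism lemma inside the proof of Proposition 4.5 of
Belegradek–Kapovitch.  In the torus expansion setup, let `I ≠ ∅` and let `D : A → A` be a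
derivation of `A` of degree `-|I|`.  Then the ℚ-linear map `φ : B → B` determined by
`φ(a·t_J) = a·t_J − t_I·D(a)·t_J` (for homogeneous `a ∈ A` and all `J`) is a
grading-preserving ℚ-algebra automorphism of `B`, with inverse determined by
`a·t_J ↦ a·t_J + t_I·D(a)·t_J`. -/
theorem derivation_twist_is_algebra_automorphism
    {B : Type} [Ring B] [Algebra ℚ B]
    (𝒜 : ℕ → Submodule ℚ B) [GradedAlgebra 𝒜]
    -- graded commutativity of `B`
    (hcomm : ∀ (p q : ℕ), ∀ a ∈ 𝒜 p, ∀ b ∈ 𝒜 q,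
      a * b = (-1 : B) ^ (p * q) * (b * a))
    -- `A` is a graded subalgebra of `B`
    (A : Subalgebra ℚ B)
    (hAgr : ∀ a ∈ A, ∀ p : ℕ, (DirectSum.decompose 𝒜 a p : B) ∈ A)
    -- `x₁, …, x_d` are degree-one elements …
    (d : ℕ) (x : Fin d → B) (hx : ∀ i, x i ∈ 𝒜 1)
    -- … whose `2^d` square-free monomials `t_I` form a basis of `B` as a left `A`-module
    (hfree : Function.Bijective
      (fun f : Finset (Fin d) → A =>
        ∑ I : Finset (Fin d), sqFreeMonomial x I * ((f I : A) : B)))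
    -- `I` is a non-empty subset of `{1,…,d}`
    (I : Finset (Fin d)) (hI : I.Nonempty)
    -- `D : A → A` is a derivation of `A` of degree `-|I|`:
    (D : A →ₗ[ℚ] A)
    (hdeg : ∀ (p : ℕ) (a : A), (a : B) ∈ 𝒜 p →
      (p < I.card → D a = 0) ∧
      (∀ q : ℕ, p = q + I.card → ((D a : A) : B) ∈ 𝒜 q))
    (hleib : ∀ (p : ℕ) (a b : A), (a : B) ∈ 𝒜 p →
      D (a * b) = D a * b + (-1 : A) ^ (I.card * p) * (a * D b)) :
    -- then the map determined by `a·t_J ↦ a·t_J − t_I·D(a)·t_J` is a grading-preserving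
    -- ℚ-algebra automorphism of `B`, with inverse determined by `a·t_J ↦ a·t_J + t_I·D(a)·t_J`,
    (∃ φ : B ≃ₐ[ℚ] B,
      (∀ (p : ℕ) (a : A) (J : Finset (Fin d)), (a : B) ∈ 𝒜 p →
        φ ((a : B) * sqFreeMonomial x J) =
          (a : B) * sqFreeMonomial x J -
            sqFreeMonomial x I * (((D a : A) : B) * sqFreeMonomial x J)) ∧
      (∀ p : ℕ, ∀ b ∈ 𝒜 p, φ b ∈ 𝒜 p) ∧
      (∀ (p : ℕ) (a : A) (J : Finset (Fin d)), (a : B) ∈ 𝒜 p →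
        φ.symm ((a : B) * sqFreeMonomial x J) =
          (a : B) * sqFreeMonomial x J +
            sqFreeMonomial x I * (((D a : A) : B) * sqFreeMonomial x J))) ∧
    -- and a ℚ-linear map satisfying this prescription is unique
    (∀ ψ₁ ψ₂ : B →ₗ[ℚ] B,
      (∀ (p : ℕ) (a : A) (J : Finset (Fin d)), (a : B) ∈ 𝒜 p →
        ψ₁ ((a : B) * sqFreeMonomial x J) =
          (a : B) * sqFreeMonomial x J -
            sqFreeMonomial x I * (((D a : A) : B) * sqFreeMonomial x J)) →
      (∀ (p : ℕ) (a : A) (J : Finset (Fin d)), (a : B) ∈ 𝒜 p →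
        ψ₂ ((a : B) * sqFreeMonomial x J) =
          (a : B) * sqFreeMonomial x J -
            sqFreeMonomial x I * (((D a : A) : B) * sqFreeMonomial x J)) →
      ψ₁ = ψ₂) := by
  have := IsAddTorsionFree.of_module_rat B
  set N := twistDerivation I D hfree
  have hN : N.IsDerivation := isDerivation_twistDerivation hcomm hx hdeg hleib hfree hAgr
  have hNN : N ∘ₗ N = 0 := twistDerivation_comp_self hcomm hx hdeg hleib hfree hAgr hI
  have hgen : ∀ (p : ℕ) (a : A) (J : Finset (Fin d)), (a : B) ∈ 𝒜 p →
      N (a * sqFreeMonomial x J) = sqFreeMonomial x I * ((D a : A) * sqFreeMonomial x J) :=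
    fun p a J ha => by rw [twistDerivation_mul_sqFreeMonomial hcomm hx hdeg hfree ha, mul_assoc]
  refine ⟨⟨algEquivOfSqZeroDerivation N hN hNN, fun p a J ha => ?_, fun p b hb => ?_,
    fun p a J ha => ?_⟩, fun ψ₁ ψ₂ h₁ h₂ => ?_⟩
  · rw [algEquivOfSqZeroDerivation_apply, hgen p a J ha]
  · exact sub_mem hb (twistDerivation_mem hcomm hx hdeg hfree hAgr hb)
  · rw [algEquivOfSqZeroDerivation_symm_apply, hgen p a J ha]
  · refine LinearMap.ext_on (span_homogeneousMulSqFreeMonomials hcomm hx hfree hAgr) ?_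
    rintro _ ⟨p, a, J, ha, rfl⟩
    rw [h₁ p a J ha, h₂ p a J ha]
end

section
/- In the torus expansion setup, let h be a grading-preserving ℚ-algebra endomorphism of B with partial derivatives D_I : A → A, and write D_0 = D_∅ and D_1 = D_{{1}} (the component at t_{{1}} = x_1). Then for all homogeneous a ∈ A_p and all b ∈ A: D_1(ab) = D_1(a)·D_0(b) + (−1)^p·D_0(a)·D_1(b). Consequently, if D_0 is bijective, then D_1 ∘ D_0^{−1} is a derivation of A of degree −1, i.e. it maps A_p into A_{p−1} and satisfies E(ab) = E(a)b + (−1)^p a E(b) for E = D_1 ∘ D_0^{−1}, a ∈ A_p, b ∈ A. -/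
open DirectSum

section FreeBasis

variable {R B ι : Type*} [CommSemiring R] [Semiring B] [Algebra R B] [Fintype ι]

def IsFreeBasis (A : Subalgebra R B) (t : ι → B) : Prop :=
  Function.Bijective fun f : ι → A => ∑ i, t i * (f i : B)

def basisCombination (A : Subalgebra R B) (t : ι → B) : (ι → A) →ₗ[R] B where
  toFun f := ∑ i, t i * (f i : B)
  map_add' f g := by simp [mul_add, Finset.sum_add_distrib]
  map_smul' r f := by simp [Finset.smul_sum]

variable {A : Subalgebra R B} {t : ι → B}

noncomputable def basisCoeff (ht : IsFreeBasis A t) : B ≃ₗ[R] (ι → A) :=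
  (LinearEquiv.ofBijective (basisCombination A t) ht).symm

variable (ht : IsFreeBasis A t)

theorem basisCoeff_sum (f : ι → A) : basisCoeff ht (∑ i, t i * (f i : B)) = f :=
  (LinearEquiv.ofBijective (basisCombination A t) ht).symm_apply_apply f

theorem sum_basisCoeff (y : B) : ∑ i, t i * (basisCoeff ht y i : B) = y :=
  (LinearEquiv.ofBijective (basisCombination A t) ht).apply_symm_apply y

theorem basisCoeff_mul (y : B) (c : A) (i : ι) :
    basisCoeff ht (y * c) i = basisCoeff ht y i * c := by
  have : y * c = ∑ i, t i * ((basisCoeff ht y i * c : A) : B) := by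
    conv_lhs => rw [← sum_basisCoeff ht y]
    simp only [Finset.sum_mul, Subalgebra.coe_mul, mul_assoc]
  rw [this, basisCoeff_sum]

theorem basisCoeff_self [DecidableEq ι] (j : ι) : basisCoeff ht (t j) = Pi.single j 1 := by
  have : t j = ∑ i, t i * ((Pi.single j 1 : ι → A) i : B) := by
    rw [Fintype.sum_eq_single j fun i hi => by simp [hi]]
    simp
  rw [this, basisCoeff_sum]

end FreeBasis

section GradedComm

variable {R B : Type*} [CommSemiring R] [Ring B] [Algebra R B] (𝒜 : ℕ → Submodule R B)

def IsGradedComm : Prop :=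
  ∀ p q : ℕ, ∀ a ∈ 𝒜 p, ∀ b ∈ 𝒜 q, a * b = (-1 : B) ^ (p * q) * (b * a)

variable {𝒜}

theorem IsGradedComm.mul_mul_mul_comm (hcomm : IsGradedComm 𝒜) {p q : ℕ} {b c : B}
    (hb : b ∈ 𝒜 p) (hc : c ∈ 𝒜 q) (a e : B) :
    a * b * (c * e) = a * c * ((-1) ^ (p * q) * (b * e)) := by
  rw [mul_assoc a b, ← mul_assoc b c e, hcomm p q b hb c hc,
    ((Commute.neg_one_left c).pow_left _).left_comm, mul_assoc, mul_assoc, mul_assoc]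

theorem IsGradedComm.mul_eq_neg_mul (hcomm : IsGradedComm 𝒜) {p q : ℕ} (hp : Odd p)
    (hq : Odd q) {a b : B} (ha : a ∈ 𝒜 p) (hb : b ∈ 𝒜 q) : a * b = -(b * a) := by
  rw [hcomm p q a ha b hb, (hp.mul hq).neg_one_pow, neg_one_mul]

theorem IsGradedComm.mul_self_eq_zero [IsAddTorsionFree B] (hcomm : IsGradedComm 𝒜) {p : ℕ}
    (hp : Odd p) {a : B} (ha : a ∈ 𝒜 p) : a * a = 0 :=
  self_eq_neg.1 (hcomm.mul_eq_neg_mul hp hp ha ha)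

end GradedComm

section SqFreeMonomial

variable {B : Type} [Ring B] {d : ℕ} (x : Fin d → B)

theorem sqFreeMonomial_empty : sqFreeMonomial x ∅ = 1 := by
  simp [sqFreeMonomial]

theorem sqFreeMonomial_empty_mul (J : Finset (Fin d)) :
    sqFreeMonomial x ∅ * sqFreeMonomial x J = sqFreeMonomial x J := by
  rw [sqFreeMonomial_empty, one_mul]

theorem sqFreeMonomial_mul_empty (I : Finset (Fin d)) :
    sqFreeMonomial x I * sqFreeMonomial x ∅ = sqFreeMonomial x I := by
  rw [sqFreeMonomial_empty, mul_one]

theorem sqFreeMonomial_singleton (i : Fin d) : sqFreeMonomial x {i} = x i := by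
  simp [sqFreeMonomial]

theorem sqFreeMonomial_insert {a : Fin d} {s : Finset (Fin d)} (h : ∀ b ∈ s, a < b) :
    sqFreeMonomial x (insert a s) = x a * sqFreeMonomial x s := by
  rw [sqFreeMonomial, Finset.sort_insert _ (fun b hb => (h b hb).le) fun ha => (h a ha).false]
  simp [sqFreeMonomial]

theorem sqFreeMonomial_mem_s11 {R : Type*} [CommSemiring R] [Algebra R B] {𝒜 : ℕ → Submodule R B}
    [SetLike.GradedMonoid 𝒜] (hx : ∀ i, x i ∈ 𝒜 1) (I : Finset (Fin d)) :
    sqFreeMonomial x I ∈ 𝒜 I.card := by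
  simpa [sqFreeMonomial, Finset.length_sort] using
    SetLike.list_prod_map_mem_graded (I.sort (· ≤ ·)) (fun _ => 1) x fun i _ => hx i

variable {x}

theorem exists_mul_sqFreeMonomial (hsq : ∀ i, x i * x i = 0)
    (hanti : ∀ i j, x i * x j = -(x j * x i)) (i : Fin d) (s : Finset (Fin d)) :
    ∃ n : ℤ, x i * sqFreeMonomial x s = n • sqFreeMonomial x (insert i s) := by
  induction s using Finset.induction_on_min with
  | empty => exact ⟨1, by simp [sqFreeMonomial_empty, sqFreeMonomial_singleton]⟩
  | insert a s ha ih =>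
    rcases lt_trichotomy i a with hia | rfl | hai
    · refine ⟨1, ?_⟩
      rw [one_smul, sqFreeMonomial_insert x (s := insert a s)]
      intro b hb
      rcases Finset.mem_insert.1 hb with rfl | hb
      exacts [hia, hia.trans (ha b hb)]
    · exact ⟨0, by rw [sqFreeMonomial_insert x ha, ← mul_assoc, hsq, zero_mul, zero_smul]⟩
    · obtain ⟨n, hn⟩ := ih
      have ha' : ∀ b ∈ insert i s, a < b := by
        intro b hb
        rcases Finset.mem_insert.1 hb with rfl | hb
        exacts [hai, ha b hb]
      refine ⟨-n, ?_⟩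
      rw [sqFreeMonomial_insert x ha, ← mul_assoc, hanti, neg_mul, mul_assoc, hn, mul_smul_comm,
        ← sqFreeMonomial_insert x ha', Finset.insert_comm, neg_smul]

theorem exists_sqFreeMonomial_mul (hsq : ∀ i, x i * x i = 0)
    (hanti : ∀ i j, x i * x j = -(x j * x i)) (I J : Finset (Fin d)) :
    ∃ n : ℤ, sqFreeMonomial x I * sqFreeMonomial x J = n • sqFreeMonomial x (I ∪ J) := by
  induction I using Finset.induction_on_min with
  | empty => exact ⟨1, by simp [sqFreeMonomial_empty]⟩
  | insert a I ha ih =>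
    obtain ⟨n, hn⟩ := ih
    obtain ⟨m, hm⟩ := exists_mul_sqFreeMonomial hsq hanti a (I ∪ J)
    refine ⟨n * m, ?_⟩
    rw [sqFreeMonomial_insert x ha, mul_assoc, hn, mul_smul_comm, hm, smul_smul,
      Finset.insert_union, mul_comm]

end SqFreeMonomial

section GradedSubalgebra

variable {R B ι : Type*} [CommSemiring R] [Semiring B] [Algebra R B]
  (𝒜 : ℕ → Submodule R B) [GradedAlgebra 𝒜]

def IsGradedSubalgebra (A : Subalgebra R B) : Prop :=
  ∀ a ∈ A, ∀ p : ℕ, (decompose 𝒜 a p : B) ∈ A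

variable {𝒜} {A : Subalgebra R B} [Fintype ι] {t : ι → B}

def IsGradedSubalgebra.proj (hA : IsGradedSubalgebra 𝒜 A) (a : A) (p : ℕ) : A :=
  ⟨decompose 𝒜 a p, hA a a.2 p⟩

theorem IsGradedSubalgebra.coe_proj (hA : IsGradedSubalgebra 𝒜 A) (a : A) (p : ℕ) :
    (hA.proj a p : B) = decompose 𝒜 a p :=
  rfl

theorem IsGradedSubalgebra.basisCoeff_eq_proj_of_mem (hA : IsGradedSubalgebra 𝒜 A)
    (ht : IsFreeBasis A t) {deg : ι → ℕ} (htdeg : ∀ i, t i ∈ 𝒜 (deg i)) {p : ℕ} {y : B}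
    (hy : y ∈ 𝒜 p) (i : ι) :
    basisCoeff ht y i = if deg i ≤ p then hA.proj (basisCoeff ht y i) (p - deg i) else 0 := by
  have key : ∑ i,
      t i * ((if deg i ≤ p then hA.proj (basisCoeff ht y i) (p - deg i) else 0 : A) : B) = y := by
    calc _ = ∑ i, (decompose 𝒜 (t i * basisCoeff ht y i) p : B) := by
          refine Finset.sum_congr rfl fun i _ => ?_
          rw [coe_decompose_mul_of_left_mem 𝒜 p (htdeg i)]
          split_ifs <;> simp [hA.coe_proj]
      _ = decompose 𝒜 y p := by
          simp only [← GradedAlgebra.proj_apply, ← map_sum, sum_basisCoeff]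
      _ = y := decompose_of_mem_same 𝒜 hy
  conv_lhs => rw [← key, basisCoeff_sum]

theorem IsGradedSubalgebra.basisCoeff_mem_of_mem (hA : IsGradedSubalgebra 𝒜 A)
    (ht : IsFreeBasis A t) {deg : ι → ℕ} (htdeg : ∀ i, t i ∈ 𝒜 (deg i)) {p : ℕ} {y : B}
    (hy : y ∈ 𝒜 p) (i : ι) :
    (basisCoeff ht y i : B) ∈ 𝒜 (p - deg i) := by
  rw [hA.basisCoeff_eq_proj_of_mem ht htdeg hy i]
  split_ifs
  exacts [SetLike.coe_mem _, zero_mem _]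

theorem IsGradedSubalgebra.basisCoeff_eq_zero_of_lt (hA : IsGradedSubalgebra 𝒜 A)
    (ht : IsFreeBasis A t) {deg : ι → ℕ} (htdeg : ∀ i, t i ∈ 𝒜 (deg i)) {p : ℕ} {y : B}
    (hy : y ∈ 𝒜 p) {i : ι} (hi : p < deg i) : basisCoeff ht y i = 0 := by
  rw [hA.basisCoeff_eq_proj_of_mem ht htdeg hy i, if_neg hi.not_ge]

theorem IsGradedSubalgebra.coe_decompose_map (hA : IsGradedSubalgebra 𝒜 A) {φ : A →ₗ[R] A}
    (hφ : ∀ p (a : A), (a : B) ∈ 𝒜 p → (φ a : B) ∈ 𝒜 p) (a : A) (p : ℕ) :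
    (decompose 𝒜 (φ a : B) p : B) = φ (hA.proj a p) := by
  classical
  have hsum : a = ∑ q ∈ (decompose 𝒜 (a : B)).support, hA.proj a q :=
    Subtype.ext (by simp [hA.coe_proj, sum_support_decompose])
  calc (decompose 𝒜 (φ a : B) p : B)
      = ∑ q ∈ (decompose 𝒜 (a : B)).support, (decompose 𝒜 (φ (hA.proj a q) : B) p : B) := by
        conv_lhs => rw [hsum]
        simp only [map_sum, ← GradedAlgebra.proj_apply, AddSubmonoidClass.coe_finsetSum]
    _ = decompose 𝒜 (φ (hA.proj a p) : B) p := by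
      refine Finset.sum_eq_single p (fun q _ hq =>
        decompose_of_mem_ne 𝒜 (hφ q _ (SetLike.coe_mem _)) hq) fun hp => ?_
      have : hA.proj a p = 0 :=
        Subtype.ext (by rw [hA.coe_proj, DFinsupp.notMem_support_iff.1 hp]; rfl)
      simp [this]
    _ = φ (hA.proj a p) := decompose_of_mem_same 𝒜 (hφ p _ (SetLike.coe_mem _))

theorem IsGradedSubalgebra.mem_of_map_mem (hA : IsGradedSubalgebra 𝒜 A) {φ : A →ₗ[R] A}
    (hφ : ∀ p (a : A), (a : B) ∈ 𝒜 p → (φ a : B) ∈ 𝒜 p) (hinj : Function.Injective φ)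
    {p : ℕ} {a : A} (ha : (φ a : B) ∈ 𝒜 p) : (a : B) ∈ 𝒜 p := by
  have : φ a = φ (hA.proj a p) :=
    Subtype.ext ((decompose_of_mem_same 𝒜 ha).symm.trans (hA.coe_decompose_map hφ a p))
  rw [hinj this]
  exact SetLike.coe_mem (decompose 𝒜 (a : B) p)

end GradedSubalgebra

section PartialDerivatives

variable {R B ι : Type*} [CommRing R] [Ring B] [Algebra R B] {𝒜 : ℕ → Submodule R B}
  [GradedAlgebra 𝒜] {A : Subalgebra R B} [Fintype ι] {t : ι → B} {h : B →ₐ[R] B}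
  {D : ι → A →ₗ[R] A}

theorem partialDeriv_eq_basisCoeff (ht : IsFreeBasis A t)
    (hD : ∀ a : A, h a = ∑ i, t i * (D i a : B)) (i : ι) (a : A) :
    D i a = basisCoeff ht (h a) i := by
  rw [hD, basisCoeff_sum]

theorem partialDeriv_mem (hA : IsGradedSubalgebra 𝒜 A) (ht : IsFreeBasis A t) {deg : ι → ℕ}
    (htdeg : ∀ i, t i ∈ 𝒜 (deg i)) (hgr : ∀ p, ∀ b ∈ 𝒜 p, h b ∈ 𝒜 p)
    (hD : ∀ a : A, h a = ∑ i, t i * (D i a : B)) {p : ℕ} {a : A} (ha : (a : B) ∈ 𝒜 p) (i : ι) :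
    (D i a : B) ∈ 𝒜 (p - deg i) := by
  rw [partialDeriv_eq_basisCoeff ht hD]
  exact hA.basisCoeff_mem_of_mem ht htdeg (hgr p _ ha) i

theorem partialDeriv_eq_zero_of_lt (hA : IsGradedSubalgebra 𝒜 A) (ht : IsFreeBasis A t)
    {deg : ι → ℕ} (htdeg : ∀ i, t i ∈ 𝒜 (deg i)) (hgr : ∀ p, ∀ b ∈ 𝒜 p, h b ∈ 𝒜 p)
    (hD : ∀ a : A, h a = ∑ i, t i * (D i a : B)) {p : ℕ} {a : A} (ha : (a : B) ∈ 𝒜 p) {i : ι}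
    (hi : p < deg i) : D i a = 0 := by
  rw [partialDeriv_eq_basisCoeff ht hD]
  exact hA.basisCoeff_eq_zero_of_lt ht htdeg (hgr p _ ha) hi

theorem partialDeriv_mul (hcomm : IsGradedComm 𝒜) (hA : IsGradedSubalgebra 𝒜 A)
    (ht : IsFreeBasis A t) {deg : ι → ℕ} (htdeg : ∀ i, t i ∈ 𝒜 (deg i))
    (hgr : ∀ p, ∀ b ∈ 𝒜 p, h b ∈ 𝒜 p) (hD : ∀ a : A, h a = ∑ i, t i * (D i a : B)) {p : ℕ}
    {a : A} (ha : (a : B) ∈ 𝒜 p) (b : A) (k : ι) :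
    D k (a * b) = ∑ i, ∑ j,
      basisCoeff ht (t i * t j) k * ((-1) ^ ((p - deg i) * deg j) * (D i a * D j b)) := by
  rw [partialDeriv_eq_basisCoeff ht hD, Subalgebra.coe_mul, map_mul, hD a, hD b,
    Finset.sum_mul_sum, map_sum, Finset.sum_apply]
  refine Finset.sum_congr rfl fun i _ => ?_
  rw [map_sum, Finset.sum_apply]
  refine Finset.sum_congr rfl fun j _ => ?_
  rw [hcomm.mul_mul_mul_comm (partialDeriv_mem hA ht htdeg hgr hD ha i) (htdeg j)]
  exact_mod_cast basisCoeff_mul ht _ ((-1) ^ ((p - deg i) * deg j) * (D i a * D j b)) k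

end PartialDerivatives

section TorusExpansion

variable {R : Type*} {B : Type} [CommRing R] [Ring B] [Algebra R B] [IsAddTorsionFree B]
  {𝒜 : ℕ → Submodule R B} {A : Subalgebra R B} {d : ℕ} {x : Fin d → B}
  {h : B →ₐ[R] B} {D : Finset (Fin d) → A →ₗ[R] A}

theorem basisCoeff_sqFreeMonomial_mul_of_ne (hcomm : IsGradedComm 𝒜) (hx : ∀ i, x i ∈ 𝒜 1)
    (ht : IsFreeBasis A (sqFreeMonomial x)) {I J K : Finset (Fin d)} (hK : K ≠ I ∪ J) :
    basisCoeff ht (sqFreeMonomial x I * sqFreeMonomial x J) K = 0 := by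
  obtain ⟨n, hn⟩ := exists_sqFreeMonomial_mul (fun i => hcomm.mul_self_eq_zero odd_one (hx i))
    (fun i j => hcomm.mul_eq_neg_mul odd_one odd_one (hx i) (hx j)) I J
  rw [hn, map_zsmul, Pi.smul_apply, basisCoeff_self, Pi.single_eq_of_ne hK, smul_zero]

theorem partialDeriv_empty_mul [GradedAlgebra 𝒜] (hcomm : IsGradedComm 𝒜)
    (hA : IsGradedSubalgebra 𝒜 A) (hx : ∀ i, x i ∈ 𝒜 1) (ht : IsFreeBasis A (sqFreeMonomial x))
    (hgr : ∀ p, ∀ b ∈ 𝒜 p, h b ∈ 𝒜 p) (hD : ∀ a : A, h a = ∑ I, sqFreeMonomial x I * (D I a : B))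
    {p : ℕ} {a : A} (ha : (a : B) ∈ 𝒜 p) (b : A) : D ∅ (a * b) = D ∅ a * D ∅ b := by
  rw [partialDeriv_mul hcomm hA ht (sqFreeMonomial_mem_s11 x hx) hgr hD ha b,
    Fintype.sum_eq_single ∅, Fintype.sum_eq_single ∅]
  · simp [sqFreeMonomial_mul_empty, basisCoeff_self]
  · intro J hJ
    rw [basisCoeff_sqFreeMonomial_mul_of_ne hcomm hx ht (by simpa using hJ.symm), zero_mul]
  · intro I hI
    refine Finset.sum_eq_zero fun J _ => ?_
    rw [basisCoeff_sqFreeMonomial_mul_of_ne hcomm hx ht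
      fun hIJ => hI (Finset.union_eq_empty.1 hIJ.symm).1, zero_mul]

theorem partialDeriv_singleton_mul [GradedAlgebra 𝒜] (hcomm : IsGradedComm 𝒜)
    (hA : IsGradedSubalgebra 𝒜 A) (hx : ∀ i, x i ∈ 𝒜 1) (ht : IsFreeBasis A (sqFreeMonomial x))
    (hgr : ∀ p, ∀ b ∈ 𝒜 p, h b ∈ 𝒜 p) (hD : ∀ a : A, h a = ∑ I, sqFreeMonomial x I * (D I a : B))
    {p : ℕ} {a : A} (ha : (a : B) ∈ 𝒜 p) (b : A) (i : Fin d) :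
    D {i} (a * b) = D {i} a * D ∅ b + (-1) ^ p * (D ∅ a * D {i} b) := by
  have hcoeff {I J : Finset (Fin d)} (hIJ : ¬I ∪ J ⊆ {i}) :
      basisCoeff ht (sqFreeMonomial x I * sqFreeMonomial x J) {i} = 0 :=
    basisCoeff_sqFreeMonomial_mul_of_ne hcomm hx ht fun hi => hIJ hi.symm.subset
  rw [partialDeriv_mul hcomm hA ht (sqFreeMonomial_mem_s11 x hx) hgr hD ha b,
    Fintype.sum_eq_add ∅ {i} (Finset.singleton_ne_empty i).symm, Fintype.sum_eq_single {i},
    Fintype.sum_eq_single ∅]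
  · simp [sqFreeMonomial_empty_mul, sqFreeMonomial_mul_empty, basisCoeff_self, add_comm]
  · intro J hJ
    by_cases hJi : J = {i}
    · rw [hJi, sqFreeMonomial_singleton, hcomm.mul_self_eq_zero odd_one (hx i), map_zero,
        Pi.zero_apply, zero_mul]
    · rw [hcoeff fun hsub => ?_, zero_mul]
      rcases Finset.subset_singleton_iff.1 (Finset.union_subset_right hsub) with hJ₀ | hJi'
      exacts [hJ hJ₀, hJi hJi']
  · intro J hJ
    rw [basisCoeff_sqFreeMonomial_mul_of_ne hcomm hx ht (by simpa [eq_comm] using hJ), zero_mul]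
  · rintro I ⟨hI₀, hIi⟩
    refine Finset.sum_eq_zero fun J _ => ?_
    rw [hcoeff fun hsub => ?_, zero_mul]
    rcases Finset.subset_singleton_iff.1 (Finset.union_subset_left hsub) with hI₀' | hIi'
    exacts [hI₀ hI₀', hIi hIi']

end TorusExpansion

/-- identity (1) ("e:hom") of Section 4 of Belegradek–Kapovitch and its
consequence.  In the torus expansion setup, let `h` be a grading-preserving ℚ-algebra
endomorphism of `B` with partial derivatives `D_I : A → A`, and write `D₀ = D_∅`,
`D₁ = D_{{1}}`.  Then `D₁(ab) = D₁(a)·D₀(b) + (−1)^p·D₀(a)·D₁(b)` for `a ∈ A_p`, `b ∈ A`;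
consequently, if `D₀` is bijective then `D₁ ∘ D₀⁻¹` is a derivation of `A` of degree `-1`. -/
theorem first_partial_derivative_identity
    {B : Type} [Ring B] [Algebra ℚ B]
    (𝒜 : ℕ → Submodule ℚ B) [GradedAlgebra 𝒜]
    -- graded commutativity of `B`
    (hcomm : ∀ (p q : ℕ), ∀ a ∈ 𝒜 p, ∀ b ∈ 𝒜 q,
      a * b = (-1 : B) ^ (p * q) * (b * a))
    -- `A` is a graded subalgebra of `B`
    (A : Subalgebra ℚ B)
    (hAgr : ∀ a ∈ A, ∀ p : ℕ, (DirectSum.decompose 𝒜 a p : B) ∈ A)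
    -- `x₁, …, x_d` are degree-one elements (`d ≥ 1`) …
    (d : ℕ) (hd : 0 < d) (x : Fin d → B) (hx : ∀ i, x i ∈ 𝒜 1)
    -- … whose `2^d` square-free monomials `t_I` form a basis of `B` as a left `A`-module
    (hfree : Function.Bijective
      (fun f : Finset (Fin d) → A =>
        ∑ I : Finset (Fin d), sqFreeMonomial x I * ((f I : A) : B)))
    -- `h` is a grading-preserving ℚ-algebra endomorphism of `B`
    (h : B →ₐ[ℚ] B)
    (hgr : ∀ p : ℕ, ∀ b ∈ 𝒜 p, h b ∈ 𝒜 p)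
    -- with partial derivatives `D_I : A → A`
    (D : Finset (Fin d) → (A →ₗ[ℚ] A))
    (hD : ∀ a : A, h a = ∑ I : Finset (Fin d), sqFreeMonomial x I * ((D I a : A) : B)) :
    -- writing `D₀ = D_∅` and `D₁ = D_{{1}}`:
    (∀ (p : ℕ) (a b : A), (a : B) ∈ 𝒜 p →
      D {⟨0, hd⟩} (a * b) =
        D {⟨0, hd⟩} a * D ∅ b + (-1 : A) ^ p * (D ∅ a * D {⟨0, hd⟩} b)) ∧
    -- and if `D₀` is bijective, then `E = D₁ ∘ D₀⁻¹` is a derivation of degree `-1`: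
    (Function.Bijective (D ∅) →
      ∀ E : A →ₗ[ℚ] A, (∀ a : A, E (D ∅ a) = D {⟨0, hd⟩} a) →
        (∀ (p : ℕ) (a : A), (a : B) ∈ 𝒜 p →
          (p = 0 → E a = 0) ∧
          (∀ q : ℕ, p = q + 1 → ((E a : A) : B) ∈ 𝒜 q)) ∧
        (∀ (p : ℕ) (a b : A), (a : B) ∈ 𝒜 p →
          E (a * b) = E a * b + (-1 : A) ^ p * (a * E b))) := by
  have := IsAddTorsionFree.of_module_rat (M := B)
  have htdeg := sqFreeMonomial_mem_s11 x hx
  refine ⟨fun p a b ha => partialDeriv_singleton_mul hcomm hAgr hx hfree hgr hD ha b _,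
    fun hbij E hE => ?_⟩
  have hpreimage {p : ℕ} {a : A} (ha : (a : B) ∈ 𝒜 p) : ∃ a', D ∅ a' = a ∧ (a' : B) ∈ 𝒜 p := by
    obtain ⟨a', rfl⟩ := hbij.2 a
    refine ⟨a', rfl, IsGradedSubalgebra.mem_of_map_mem hAgr (fun q c hc => ?_) hbij.1 ha⟩
    simpa using partialDeriv_mem hAgr hfree htdeg hgr hD hc ∅
  refine ⟨fun p a ha => ?_, fun p a b ha => ?_⟩
  · obtain ⟨a', rfl, ha'⟩ := hpreimage ha
    rw [hE]
    refine ⟨fun hp => partialDeriv_eq_zero_of_lt hAgr hfree htdeg hgr hD ha' (by simp [hp]),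
      fun q hq => ?_⟩
    simpa [hq] using partialDeriv_mem hAgr hfree htdeg hgr hD ha' {⟨0, hd⟩}
  · obtain ⟨a', rfl, ha'⟩ := hpreimage ha
    obtain ⟨b', rfl⟩ := hbij.2 b
    rw [← partialDeriv_empty_mul hcomm hAgr hx hfree hgr hD ha' b', hE, hE, hE,
      partialDeriv_singleton_mul hcomm hAgr hx hfree hgr hD ha' b']
end
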